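/- arXiv:1811.10325 — 3 statements merged into one kernel-verified Lean document; each statement's English description precedes it below -/
import Mathlib

section
/- Let ȳ > 0, Λ a positive integer, s ∈ [0, ȳ], and let φ_λ = (2λ−1)ȳ/Λ. For any nonnegative reals Δ_1,…,Δ_Λ with 0 ≤ Δ_λ ≤ ȳ/Λ for all λ and ∑_λ Δ_λ = s, one has ∑_λ φ_λ Δ_λ ≥ s². -/
/-!
Write `P k = Δ 1 + ⋯ + Δ k`. Since `0 ≤ Δ k ≤ c` gives `P (k - 1) ≤ (k - 1) c`, the square grows by
`P k ^ 2 - P (k - 1) ^ 2 = (2 P (k - 1) + Δ k) Δ k ≤ (2 k - 1) c Δ k`,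
i.e. by at most the slope of the `k`-th segment times `Δ k`; summing over `k` telescopes to the claim.
-/

open Finset

lemma sum_Icc_one_le_mul {f : ℕ → ℝ} {c : ℝ} {n : ℕ} (hf : ∀ l ∈ Icc 1 n, f l ≤ c) :
    ∑ l ∈ Icc 1 n, f l ≤ n * c := by
  simpa using sum_le_card_nsmul (Icc 1 n) f c hf

lemma add_sq_le_sq_add_odd_mul {p d c x : ℝ} (hp : p ≤ x * c) (hd : 0 ≤ d) (hdc : d ≤ c) :
    (p + d) ^ 2 ≤ p ^ 2 + (2 * (x + 1) - 1) * c * d := by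
  nlinarith [mul_le_mul_of_nonneg_right hp hd, mul_le_mul_of_nonneg_right hdc hd]

theorem sq_sum_Icc_one_le_sum_odd_mul {Δ : ℕ → ℝ} {c : ℝ} (n : ℕ)
    (hΔ : ∀ l ∈ Icc 1 n, 0 ≤ Δ l ∧ Δ l ≤ c) :
    (∑ l ∈ Icc 1 n, Δ l) ^ 2 ≤ ∑ l ∈ Icc 1 n, (2 * (l : ℝ) - 1) * c * Δ l := by
  induction n with
  | zero => simp
  | succ n ih =>
    have hΔ' : ∀ l ∈ Icc 1 n, 0 ≤ Δ l ∧ Δ l ≤ c := fun l hl =>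
      hΔ l (Icc_subset_Icc_right n.le_succ hl)
    obtain ⟨hd, hdc⟩ := hΔ (n + 1) (by simp)
    rw [sum_Icc_succ_top (by omega), sum_Icc_succ_top (by omega), Nat.cast_succ]
    calc (∑ l ∈ Icc 1 n, Δ l + Δ (n + 1)) ^ 2
        ≤ (∑ l ∈ Icc 1 n, Δ l) ^ 2 + (2 * ((n : ℝ) + 1) - 1) * c * Δ (n + 1) :=
          add_sq_le_sq_add_odd_mul (sum_Icc_one_le_mul fun l hl => (hΔ' l hl).2) hd hdc
      _ ≤ _ := by gcongr; exact ih hΔ'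

theorem pwl_feasible_ge_sq_general (ybar : ℝ) (Λ : ℕ)
    (s : ℝ) (Δ : ℕ → ℝ)
    (hΔ : ∀ l ∈ Finset.Icc 1 Λ, 0 ≤ Δ l ∧ Δ l ≤ ybar / Λ)
    (hsum : ∑ l ∈ Finset.Icc 1 Λ, Δ l = s) :
    s ^ 2 ≤ ∑ l ∈ Finset.Icc 1 Λ, (2 * (l : ℝ) - 1) * ybar / Λ * Δ l := by
  simpa only [hsum, mul_div_assoc] using sq_sum_Icc_one_le_sum_odd_mul Λ hΔ

/-- Every feasible choice of the PWL auxiliary variables overestimates the square: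
if `0 ≤ Δ_λ ≤ ȳ/Λ`, `∑ Δ_λ = s`, `s ∈ [0, ȳ]`, then `∑ φ_λ Δ_λ ≥ s²`
where `φ_λ = (2λ−1)ȳ/Λ`. -/
theorem pwl_feasible_ge_sq (ybar : ℝ) (hy : 0 < ybar) (Λ : ℕ) (hΛ : 0 < Λ)
    (s : ℝ) (hs : s ∈ Set.Icc 0 ybar) (Δ : ℕ → ℝ)
    (hΔ : ∀ l ∈ Finset.Icc 1 Λ, 0 ≤ Δ l ∧ Δ l ≤ ybar / Λ)
    (hsum : ∑ l ∈ Finset.Icc 1 Λ, Δ l = s) :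
    s ^ 2 ≤ ∑ l ∈ Finset.Icc 1 Λ, (2 * (l : ℝ) - 1) * ybar / Λ * Δ l :=
  pwl_feasible_ge_sq_general ybar Λ s Δ hΔ hsum
end

section
/- With the setup of the iterative sequence ȳ_{g+1} = √(F_{ȳ_g}(s*)) for fixed s* > 0 and s* ≤ ȳ_0, the limit L = lim ȳ_g satisfies L² = F_L(s*), and consequently s* ≤ L and L² − (s*)² ≤ L²/(4Λ²), so L ≤ s*/√(1 − 1/(4Λ²)). -/
/-!
Writing `w = ȳ/Λ` and `s = (k + θ) w` with `k = ⌊s/w⌋`, `θ = fract (s/w)`, the interpolant is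
`F_ȳ(s) = s² + θ (1 - θ) w²`, so `s² ≤ F_ȳ(s) ≤ s² + ȳ²/(4Λ²)`, and `ȳ ↦ F_ȳ(s)` is continuous
away from `ȳ = 0` because `θ ↦ θ (1 - θ)` takes the same value at `0` and `1`.
The first inequality keeps the sequence above `s*`, continuity makes the limit a fixed point of
`ȳ ↦ √(F_ȳ(s*))`, and the error bound at the fixed point gives the estimates.
-/

/-- The piecewise linear interpolant of `t²` on `[0, ȳ]` with `Λ` equal segments. -/
noncomputable def pwl (ybar : ℝ) (Λ : ℕ) (s : ℝ) : ℝ :=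
  let w := ybar / Λ
  let k : ℤ := ⌊s / w⌋
  (k : ℝ) ^ 2 * w ^ 2 + (2 * (k : ℝ) + 1) * w * (s - (k : ℝ) * w)

open Filter Topology

section Fract

variable {α : Type*} [Field α] [LinearOrder α] [IsStrictOrderedRing α] [FloorRing α]

lemma fract_mul_one_sub_fract_nonneg (x : α) : 0 ≤ Int.fract x * (1 - Int.fract x) :=
  mul_nonneg (Int.fract_nonneg x) (sub_nonneg.2 (Int.fract_lt_one x).le)

lemma fract_mul_one_sub_fract_le (x : α) : Int.fract x * (1 - Int.fract x) ≤ 1 / 4 := by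
  nlinarith [sq_nonneg (Int.fract x - 1 / 2)]

lemma continuous_fract_mul_one_sub_fract [TopologicalSpace α] [OrderTopology α]
    [IsTopologicalRing α] : Continuous fun x : α => Int.fract x * (1 - Int.fract x) :=
  ContinuousOn.comp_fract'' (f := fun t : α => t * (1 - t)) (by fun_prop) (by simp)

end Fract

section Interpolant

variable {Λ : ℕ} {ybar : ℝ}

lemma pwl_eq_sq_add_fract (hΛ : Λ ≠ 0) (hy : ybar ≠ 0) (s : ℝ) :
    pwl ybar Λ s = s ^ 2 +
      Int.fract (s / (ybar / Λ)) * (1 - Int.fract (s / (ybar / Λ))) * (ybar / Λ) ^ 2 := by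
  have hw : ybar / Λ ≠ 0 := div_ne_zero hy (Nat.cast_ne_zero.2 hΛ)
  simp only [pwl, Int.fract]
  obtain ⟨u, rfl⟩ : ∃ u, s = u * (ybar / Λ) := ⟨s / (ybar / Λ), (div_mul_cancel₀ s hw).symm⟩
  rw [mul_div_cancel_right₀ u hw]
  ring

lemma sq_le_pwl (hΛ : Λ ≠ 0) (hy : ybar ≠ 0) (s : ℝ) : s ^ 2 ≤ pwl ybar Λ s := by
  rw [pwl_eq_sq_add_fract hΛ hy]
  have := fract_mul_one_sub_fract_nonneg (s / (ybar / Λ))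
  have := sq_nonneg (ybar / Λ)
  nlinarith

lemma pwl_sub_sq_le (hΛ : Λ ≠ 0) (hy : ybar ≠ 0) (s : ℝ) :
    pwl ybar Λ s - s ^ 2 ≤ ybar ^ 2 / (4 * (Λ : ℝ) ^ 2) := by
  rw [pwl_eq_sq_add_fract hΛ hy, add_sub_cancel_left]
  calc Int.fract (s / (ybar / Λ)) * (1 - Int.fract (s / (ybar / Λ))) * (ybar / Λ) ^ 2
      ≤ 1 / 4 * (ybar / Λ) ^ 2 :=
        mul_le_mul_of_nonneg_right (fract_mul_one_sub_fract_le _) (sq_nonneg _)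
    _ = ybar ^ 2 / (4 * (Λ : ℝ) ^ 2) := by ring

lemma le_sqrt_pwl (hΛ : Λ ≠ 0) {s : ℝ} (hs : 0 < s) (hy : s ≤ ybar) :
    s ≤ √(pwl ybar Λ s) :=
  Real.le_sqrt_of_sq_le (sq_le_pwl hΛ (hs.trans_le hy).ne' s)

lemma continuousAt_pwl (hΛ : Λ ≠ 0) (hy : ybar ≠ 0) (s : ℝ) :
    ContinuousAt (fun y => pwl y Λ s) ybar := by
  have hΛ' : (Λ : ℝ) ≠ 0 := Nat.cast_ne_zero.2 hΛ
  have hw : ContinuousAt (fun y : ℝ => y / Λ) ybar := continuousAt_id.div_const _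
  have hsw : ContinuousAt (fun y : ℝ => s / (y / Λ)) ybar :=
    continuousAt_const.div hw (div_ne_zero hy hΛ')
  refine ContinuousAt.congr ?_ (eventually_ne_nhds hy |>.mono
    fun y hy => (pwl_eq_sq_add_fract hΛ hy s).symm)
  exact continuousAt_const.add
    ((continuous_fract_mul_one_sub_fract.continuousAt.comp hsw).mul (hw.pow 2))

end Interpolant

lemma sq_eq_pwl_of_tendsto {Λ : ℕ} (hΛ : Λ ≠ 0) {s L : ℝ} {y : ℕ → ℝ}
    (hrec : ∀ g, y (g + 1) = √(pwl (y g) Λ s)) (hL : Tendsto y atTop (𝓝 L)) (hL0 : L ≠ 0) :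
    L ^ 2 = pwl L Λ s := by
  set f : ℝ → ℝ := fun t => √(pwl t Λ s)
  have hy : (fun g => f^[g] (y 0)) = y := by
    funext g
    induction g with
    | zero => rfl
    | succ g ih => rw [Function.iterate_succ_apply', ih, hrec]
  have hfix : f L = L :=
    isFixedPt_of_tendsto_iterate (hy ▸ hL)
      (Real.continuous_sqrt.continuousAt.comp (continuousAt_pwl hΛ hL0 s))
  nth_rw 1 [← hfix]
  rw [Real.sq_sqrt ((sq_nonneg s).trans (sq_le_pwl hΛ hL0 s))]

lemma le_div_sqrt_one_sub_of_sq_sub_sq_le {L s ε : ℝ} (hs : 0 ≤ s) (hε : ε < 1)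
    (h : L ^ 2 - s ^ 2 ≤ L ^ 2 * ε) : L ≤ s / √(1 - ε) := by
  rw [le_div_iff₀ (Real.sqrt_pos.2 (sub_pos.2 hε))]
  calc L * √(1 - ε) ≤ |L| * √(1 - ε) := by gcongr; exact le_abs_self L
    _ = √(L ^ 2 * (1 - ε)) := by rw [Real.sqrt_mul (sq_nonneg L), Real.sqrt_sq_eq_abs]
    _ ≤ √(s ^ 2) := Real.sqrt_le_sqrt (by linarith)
    _ = s := Real.sqrt_sq hs

/-- The limit `L` of the renewal sequence satisfies `L² = F_L(s*)`, `s* ≤ L`,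
`L² − (s*)² ≤ L²/(4Λ²)`, and `L ≤ s*/√(1 − 1/(4Λ²))`. -/
theorem renewal_seq_limit (Λ : ℕ) (hΛ : 0 < Λ) (sstar : ℝ) (hs : 0 < sstar)
    (y : ℕ → ℝ) (h0 : sstar ≤ y 0)
    (hrec : ∀ g, y (g + 1) = Real.sqrt (pwl (y g) Λ sstar))
    (L : ℝ) (hL : Filter.Tendsto y Filter.atTop (nhds L)) :
    L ^ 2 = pwl L Λ sstar ∧ sstar ≤ L ∧
    L ^ 2 - sstar ^ 2 ≤ L ^ 2 / (4 * (Λ : ℝ) ^ 2) ∧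
    L ≤ sstar / Real.sqrt (1 - 1 / (4 * (Λ : ℝ) ^ 2)) := by
  have hy : ∀ g, sstar ≤ y g := fun g => by
    induction g with
    | zero => exact h0
    | succ g ih => exact hrec g ▸ le_sqrt_pwl hΛ.ne' hs ih
  have hsL : sstar ≤ L := ge_of_tendsto' hL hy
  have hL0 : L ≠ 0 := (hs.trans_le hsL).ne'
  have hfix := sq_eq_pwl_of_tendsto hΛ.ne' hrec hL hL0
  have herr : L ^ 2 - sstar ^ 2 ≤ L ^ 2 / (4 * (Λ : ℝ) ^ 2) := by
    linarith [pwl_sub_sq_le hΛ.ne' hL0 sstar]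
  have hε : 1 / (4 * (Λ : ℝ) ^ 2) < 1 := by
    have : (1 : ℝ) ≤ Λ := Nat.one_le_cast.2 hΛ
    rw [div_lt_one (by positivity)]
    nlinarith
  refine ⟨hfix, hsL, herr, le_div_sqrt_one_sub_of_sq_sub_sq_le hs.le hε ?_⟩
  rwa [mul_one_div]
end

section
/- Let ȳ > 0, Λ a positive integer, and φ_λ = (2λ−1)ȳ/Λ. For s ∈ ℝ with |s| ≤ ȳ, suppose (s⁺, s⁻, Δ_1, …, Δ_Λ) satisfy s = s⁺ − s⁻, s⁺ + s⁻ = ∑_λ Δ_λ, s⁺, s⁻ ≥ 0, and 0 ≤ Δ_λ ≤ ȳ/Λ. Then ∑_λ φ_λ Δ_λ ≥ s², i.e. the full PWL constraint system from equations (27)–(32) always overestimates the square, even when s⁺ + s⁻ > |s|. -/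
/-!
Writing `S = ∑ Δ_λ` and `h = ȳ/Λ`, the hypotheses give `|s| ≤ s⁺ + s⁻ = S`, so `s² ≤ S²`.
Adding the segments one at a time, the `λ`-th one raises the square of the partial sum by
`Δ_λ (2 S_{λ-1} + Δ_λ) ≤ Δ_λ (2 (λ-1) h + h) = φ_λ Δ_λ`, because the earlier `λ - 1` segments have
length at most `h` each; summing gives `S² ≤ ∑ φ_λ Δ_λ`.
-/

namespace PiecewiseLinearSquare

open Finset

variable {R : Type*} [CommRing R] [LinearOrder R] [IsStrictOrderedRing R]

theorem sq_sub_le_sq_add {p m : R} (hp : 0 ≤ p) (hm : 0 ≤ m) : (p - m) ^ 2 ≤ (p + m) ^ 2 := by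
  nlinarith [mul_nonneg hp hm]

theorem sum_Icc_le_mul {h : R} {Δ : ℕ → R} {n : ℕ} (hΔ : ∀ l ∈ Icc 1 n, Δ l ≤ h) :
    ∑ l ∈ Icc 1 n, Δ l ≤ n * h := by
  simpa [Nat.card_Icc, nsmul_eq_mul] using sum_le_card_nsmul _ _ _ hΔ

theorem sq_sum_Icc_le_sum_odd_mul {h : R} {Δ : ℕ → R} {n : ℕ}
    (hΔ : ∀ l ∈ Icc 1 n, 0 ≤ Δ l ∧ Δ l ≤ h) :
    (∑ l ∈ Icc 1 n, Δ l) ^ 2 ≤ ∑ l ∈ Icc 1 n, (2 * (l : R) - 1) * h * Δ l := by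
  induction n with
  | zero => simp
  | succ n ih =>
    have hΔ' : ∀ l ∈ Icc 1 n, 0 ≤ Δ l ∧ Δ l ≤ h := fun l hl =>
      hΔ l (Icc_subset_Icc_right n.le_succ hl)
    obtain ⟨hnext₀, hnext⟩ := hΔ (n + 1) (by simp)
    have hpartial : ∑ l ∈ Icc 1 n, Δ l ≤ n * h := sum_Icc_le_mul fun l hl => (hΔ' l hl).2
    rw [sum_Icc_succ_top (by omega), sum_Icc_succ_top (by omega)]
    push_cast
    nlinarith [ih hΔ', mul_le_mul_of_nonneg_left hpartial hnext₀,
      mul_le_mul_of_nonneg_left hnext hnext₀]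

end PiecewiseLinearSquare

open PiecewiseLinearSquare in
theorem pwl_system_ge_sq_general (ybar : ℝ) (Λ : ℕ)
    (s p m : ℝ) (hp : 0 ≤ p) (hm : 0 ≤ m)
    (hsplit : s = p - m) (Δ : ℕ → ℝ)
    (hΔ : ∀ l ∈ Finset.Icc 1 Λ, 0 ≤ Δ l ∧ Δ l ≤ ybar / Λ)
    (hsum : p + m = ∑ l ∈ Finset.Icc 1 Λ, Δ l) :
    s ^ 2 ≤ ∑ l ∈ Finset.Icc 1 Λ, (2 * (l : ℝ) - 1) * ybar / Λ * Δ l := by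
  simp_rw [mul_div_assoc]
  calc s ^ 2 ≤ (p + m) ^ 2 := hsplit ▸ sq_sub_le_sq_add hp hm
    _ = (∑ l ∈ Finset.Icc 1 Λ, Δ l) ^ 2 := by rw [hsum]
    _ ≤ _ := sq_sum_Icc_le_sum_odd_mul hΔ

/-- The full PWL constraint system (27)–(32) always overestimates the square:
if `s = s⁺ − s⁻`, `s⁺ + s⁻ = ∑ Δ_λ`, `s⁺, s⁻ ≥ 0`, `0 ≤ Δ_λ ≤ ȳ/Λ`, and `|s| ≤ ȳ`,
then `∑ φ_λ Δ_λ ≥ s²` with `φ_λ = (2λ−1)ȳ/Λ`. -/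
theorem pwl_system_ge_sq (ybar : ℝ) (hy : 0 < ybar) (Λ : ℕ) (hΛ : 0 < Λ)
    (s p m : ℝ) (hs : |s| ≤ ybar) (hp : 0 ≤ p) (hm : 0 ≤ m)
    (hsplit : s = p - m) (Δ : ℕ → ℝ)
    (hΔ : ∀ l ∈ Finset.Icc 1 Λ, 0 ≤ Δ l ∧ Δ l ≤ ybar / Λ)
    (hsum : p + m = ∑ l ∈ Finset.Icc 1 Λ, Δ l) :
    s ^ 2 ≤ ∑ l ∈ Finset.Icc 1 Λ, (2 * (l : ℝ) - 1) * ybar / Λ * Δ l :=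
  pwl_system_ge_sq_general ybar Λ s p m hp hm hsplit Δ hΔ hsum
end
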